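/- Let Ω ⊂ ℝ^N be a bounded domain, let a, c : Ω̄ → ℝ with a > 0 and c > 0 on Ω̄, and let u ∈ C(Ω̄) ∩ C²(Ω) satisfy u > 0 in Ω, u = 0 on ∂Ω, and −Δu(x) + c(x)·u(x)^{−1}·|∇u(x)|² = a(x) for all x ∈ Ω. Let W ∈ C²(Ω̄) satisfy W > 0 on Ω̄ and −ΔW(x) ≥ a(x) for all x ∈ Ω. Then u(x) ≤ W(x) for every x ∈ Ω̄. -/

import Mathlib

open Set Filter

/-- The Laplacian of `u : ℝ^N → ℝ`: the sum of its second partial derivatives. -/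
noncomputable def lap {N : ℕ} (u : EuclideanSpace ℝ (Fin N) → ℝ)
    (x : EuclideanSpace ℝ (Fin N)) : ℝ :=
  ∑ i : Fin N, fderiv ℝ (fun y => fderiv ℝ u y (EuclideanSpace.single i 1)) x
    (EuclideanSpace.single i 1)

/-! For every `r > 1`, `u - r W` satisfies `Δ(u - r W) ≥ -a + r a > 0` in `Ω`, because the
gradient term `c u⁻¹ |∇u|²` is nonnegative. So `u - r W` has no interior maximum; on `∂Ω` it
equals `-r W ≤ 0`, hence `u ≤ r W` on `Ω̄`, and `r → 1` gives `u ≤ W`. -/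

open Topology

/-- No differentiability is needed: where `f` is not twice differentiable, `deriv (deriv f)`
takes the junk value `0`. -/
theorem IsLocalMax.deriv_deriv_nonpos {f : ℝ → ℝ} {x₀ : ℝ} (hmax : IsLocalMax f x₀)
    (hc : ContinuousAt f x₀) : deriv (deriv f) x₀ ≤ 0 := by
  by_contra! hpos
  have hmin : IsLocalMin f x₀ := isLocalMin_of_deriv_deriv_pos hpos hmax.deriv_eq_zero hc
  have hconst : f =ᶠ[𝓝 x₀] fun _ => f x₀ :=
    (hmin.and hmax).mono fun _ hx => le_antisymm hx.2 hx.1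
  rw [hconst.deriv.deriv_eq] at hpos
  simp at hpos

section Directional

variable {E : Type*} [NormedAddCommGroup E] [NormedSpace ℝ E]

theorem DifferentiableAt.hasDerivAt_comp_add_smul {F : Type*} [NormedAddCommGroup F]
    [NormedSpace ℝ F] {h : E → F} {x v : E} {t : ℝ} (hd : DifferentiableAt ℝ h (x + t • v)) :
    HasDerivAt (fun s : ℝ => h (x + s • v)) (fderiv ℝ h (x + t • v) v) t := by
  have hline : HasDerivAt (fun s : ℝ => x + s • v) v t := by
    simpa using ((hasDerivAt_id t).smul_const v).const_add x
  exact hd.hasFDerivAt.comp_hasDerivAt t hline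

theorem ContDiffAt.differentiableAt_fderiv_apply {f : E → ℝ} {x : E} (hf : ContDiffAt ℝ 2 f x)
    (v : E) : DifferentiableAt ℝ (fun y => fderiv ℝ f y v) x :=
  (ContinuousLinearMap.apply ℝ ℝ v).differentiableAt.comp x
    ((hf.fderiv_right (m := 1) (by norm_num)).differentiableAt (by norm_num))

theorem IsLocalMax.fderiv_fderiv_apply_nonpos {f : E → ℝ} {x : E} (hmax : IsLocalMax f x)
    (hf : ContDiffAt ℝ 2 f x) (v : E) : fderiv ℝ (fun y => fderiv ℝ f y v) x v ≤ 0 := by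
  have hline : Continuous fun t : ℝ => x + t • v := by fun_prop
  have hline0 : Tendsto (fun t : ℝ => x + t • v) (𝓝 0) (𝓝 x) := by
    simpa using hline.tendsto 0
  have hdiff : ∀ᶠ y in 𝓝 x, DifferentiableAt ℝ f y :=
    (hf.eventually (by simp)).mono fun _ hy => hy.differentiableAt (by norm_num)
  have hderiv : deriv (fun t : ℝ => f (x + t • v)) =ᶠ[𝓝 0]
      fun t => fderiv ℝ f (x + t • v) v :=
    (hline0.eventually hdiff).mono fun _ ht => ht.hasDerivAt_comp_add_smul.deriv
  have hderiv2 : HasDerivAt (fun t : ℝ => fderiv ℝ f (x + t • v) v)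
      (fderiv ℝ (fun y => fderiv ℝ f y v) x v) 0 := by
    simpa using DifferentiableAt.hasDerivAt_comp_add_smul (h := fun y => fderiv ℝ f y v) (x := x)
      (v := v) (t := 0) (by simpa using hf.differentiableAt_fderiv_apply v)
  have hmax_line : IsLocalMax (fun t : ℝ => f (x + t • v)) 0 :=
    IsLocalMax.comp_continuous (by simpa using hmax) hline.continuousAt
  have := hmax_line.deriv_deriv_nonpos
    (hf.continuousAt.comp_of_eq hline.continuousAt (by simp))
  rwa [hderiv.deriv_eq, hderiv2.deriv] at this

theorem fderiv_fderiv_apply_sub_const_mul {u W : E → ℝ} {x : E} (hu : ContDiffAt ℝ 2 u x)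
    (hW : ContDiffAt ℝ 2 W x) (r : ℝ) (v : E) :
    fderiv ℝ (fun y => fderiv ℝ (fun z => u z - r * W z) y v) x v
      = fderiv ℝ (fun y => fderiv ℝ u y v) x v - r * fderiv ℝ (fun y => fderiv ℝ W y v) x v := by
  have hdiff : ∀ᶠ y in 𝓝 x, DifferentiableAt ℝ u y ∧ DifferentiableAt ℝ W y :=
    ((hu.eventually (by simp)).and (hW.eventually (by simp))).mono fun _ hy =>
      ⟨hy.1.differentiableAt (by norm_num), hy.2.differentiableAt (by norm_num)⟩
  have hfirst : (fun y => fderiv ℝ (fun z => u z - r * W z) y v)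
      =ᶠ[𝓝 x] fun y => fderiv ℝ u y v - r * fderiv ℝ W y v :=
    hdiff.mono fun y hy => by
      dsimp only
      rw [fderiv_fun_sub hy.1 (hy.2.const_mul r), fderiv_const_mul hy.2]
      simp
  have du := hu.differentiableAt_fderiv_apply v
  have dW := hW.differentiableAt_fderiv_apply v
  rw [hfirst.fderiv_eq, fderiv_fun_sub du (dW.const_mul r), fderiv_const_mul dW]
  simp

end Directional

section Laplacian

variable {N : ℕ}

theorem IsLocalMax.lap_nonpos {f : EuclideanSpace ℝ (Fin N) → ℝ} {x : EuclideanSpace ℝ (Fin N)}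
    (hmax : IsLocalMax f x) (hf : ContDiffAt ℝ 2 f x) : lap f x ≤ 0 :=
  Finset.sum_nonpos fun _ _ => hmax.fderiv_fderiv_apply_nonpos hf _

theorem lap_sub_const_mul {u W : EuclideanSpace ℝ (Fin N) → ℝ} {x : EuclideanSpace ℝ (Fin N)}
    (hu : ContDiffAt ℝ 2 u x) (hW : ContDiffAt ℝ 2 W x) (r : ℝ) :
    lap (fun y => u y - r * W y) x = lap u x - r * lap W x := by
  simp only [lap, fderiv_fderiv_apply_sub_const_mul hu hW, Finset.sum_sub_distrib,
    Finset.mul_sum]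

theorem le_of_lap_pos_of_le_on_frontier {Ω : Set (EuclideanSpace ℝ (Fin N))} (hΩo : IsOpen Ω)
    (hΩb : Bornology.IsBounded Ω) {F : EuclideanSpace ℝ (Fin N) → ℝ} {m : ℝ}
    (hFc : ContinuousOn F (closure Ω)) (hF : ContDiffOn ℝ 2 F Ω)
    (hlap : ∀ x ∈ Ω, 0 < lap F x) (hbdry : ∀ x ∈ frontier Ω, F x ≤ m) :
    ∀ x ∈ closure Ω, F x ≤ m := by
  intro x hx
  obtain ⟨x₀, hx₀, hmax⟩ := hΩb.isCompact_closure.exists_isMaxOn ⟨x, hx⟩ hFc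
  have hx₀Ω : x₀ ∉ Ω := fun hx₀Ω =>
    have hnhds : Ω ∈ 𝓝 x₀ := hΩo.mem_nhds hx₀Ω
    (hlap x₀ hx₀Ω).not_ge <| (hmax.isLocalMax (mem_of_superset hnhds subset_closure)).lap_nonpos
      (hF.contDiffAt hnhds)
  exact (hmax hx).trans (hbdry x₀ (hΩo.frontier_eq ▸ ⟨hx₀, hx₀Ω⟩))

end Laplacian

theorem comparison_with_supersolution_general
    {N : ℕ} (Ω : Set (EuclideanSpace ℝ (Fin N)))
    (hΩo : IsOpen Ω) (hΩb : Bornology.IsBounded Ω)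
    (a c : EuclideanSpace ℝ (Fin N) → ℝ)
    (hapos : ∀ x ∈ closure Ω, 0 < a x) (hcpos : ∀ x ∈ closure Ω, 0 < c x)
    (u : EuclideanSpace ℝ (Fin N) → ℝ)
    (hucont : ContinuousOn u (closure Ω))
    (hureg : ContDiffOn ℝ 2 u Ω)
    (hupos : ∀ x ∈ Ω, 0 < u x)
    (hubdry : ∀ x ∈ frontier Ω, u x = 0)
    (hueq : ∀ x ∈ Ω, -lap u x + c x * (u x)⁻¹ * ‖gradient u x‖ ^ 2 = a x)
    (W : EuclideanSpace ℝ (Fin N) → ℝ)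
    (hWreg : ContDiffOn ℝ 2 W (closure Ω))
    (hWpos : ∀ x ∈ closure Ω, 0 < W x)
    (hWsuper : ∀ x ∈ Ω, a x ≤ -lap W x) :
    ∀ x ∈ closure Ω, u x ≤ W x := by
  intro x hx
  refine (le_iff_forall_one_lt_le_mul₀ (hWpos x hx).le).mpr fun r hr => ?_
  have hWΩ : ContDiffOn ℝ 2 W Ω := hWreg.mono subset_closure
  have hlap : ∀ y ∈ Ω, 0 < lap (fun z => u z - r * W z) y := by
    intro y hy
    have hy' : y ∈ closure Ω := subset_closure hy
    rw [lap_sub_const_mul (hureg.contDiffAt (hΩo.mem_nhds hy)) (hWΩ.contDiffAt (hΩo.mem_nhds hy))]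
    have hgrad : 0 ≤ c y * (u y)⁻¹ * ‖gradient u y‖ ^ 2 := by
      have := hcpos y hy'; have := hupos y hy; positivity
    nlinarith [hueq y hy, hWsuper y hy, hapos y hy']
  have hbdry : ∀ y ∈ frontier Ω, u y - r * W y ≤ 0 := fun y hy => by
    nlinarith [hubdry y hy, hWpos y (frontier_subset_closure hy)]
  have := le_of_lap_pos_of_le_on_frontier (F := fun y => u y - r * W y) hΩo hΩb
    (hucont.sub (continuousOn_const.mul hWreg.continuousOn))
    (hureg.sub (contDiffOn_const.mul hWΩ)) hlap hbdry x hx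
  linarith

/-- **Comparison with a positive supersolution.** On a bounded domain `Ω` with `a, c > 0`
on `Ω̄`, if `u ∈ C(Ω̄) ∩ C²(Ω)` satisfies `u > 0` in `Ω`, `u = 0` on `∂Ω` and
`-Δu + c(x) u⁻¹ |∇u|² = a(x)` in `Ω`, while `W ∈ C²(Ω̄)` satisfies `W > 0` on `Ω̄` and
`-ΔW ≥ a(x)` in `Ω`, then `u ≤ W` on `Ω̄`. -/
theorem comparison_with_supersolution
    {N : ℕ} (Ω : Set (EuclideanSpace ℝ (Fin N)))
    (hΩo : IsOpen Ω) (hΩconn : IsConnected Ω) (hΩb : Bornology.IsBounded Ω)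
    (a c : EuclideanSpace ℝ (Fin N) → ℝ)
    (hapos : ∀ x ∈ closure Ω, 0 < a x) (hcpos : ∀ x ∈ closure Ω, 0 < c x)
    (u : EuclideanSpace ℝ (Fin N) → ℝ)
    (hucont : ContinuousOn u (closure Ω))
    (hureg : ContDiffOn ℝ 2 u Ω)
    (hupos : ∀ x ∈ Ω, 0 < u x)
    (hubdry : ∀ x ∈ frontier Ω, u x = 0)
    (hueq : ∀ x ∈ Ω, -lap u x + c x * (u x)⁻¹ * ‖gradient u x‖ ^ 2 = a x)
    (W : EuclideanSpace ℝ (Fin N) → ℝ)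
    (hWreg : ContDiffOn ℝ 2 W (closure Ω))
    (hWpos : ∀ x ∈ closure Ω, 0 < W x)
    (hWsuper : ∀ x ∈ Ω, a x ≤ -lap W x) :
    ∀ x ∈ closure Ω, u x ≤ W x :=
  comparison_with_supersolution_general Ω hΩo hΩb a c hapos hcpos u hucont hureg hupos hubdry hueq W
    hWreg hWpos hWsuper
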